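/- Let (x_j) be a bounded sequence in a real Banach space X having a weak*-cluster point G in X** with G ∉ X. Let d = dist(G, X) (the infimum of ‖G − x‖ over x in the canonical image of X), let ε > 0, and set λ = 1/d + ε and β = (‖G‖ + d)/d + ε. Then (x_j) has a subsequence (b_j) satisfying: (1) (b_j) is β-basic; (2) |∑_{j=k}^n c_j| ≤ λ‖∑_{j=1}^n c_j b_j‖ for all 1 ≤ k ≤ n < ∞ and all scalars c_1,…,c_n. -/

import Mathlib

open Finset Filter Metric NormedSpace

noncomputable section

universe u

variable {X Y : Type*} [NormedAddCommGroup X] [NormedSpace ℝ X]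
  [NormedAddCommGroup Y] [NormedSpace ℝ Y]

/-- `b` is a `lam`-basic sequence: for all scalars `c` and all `k ≤ n`,
`‖∑_{j<k} c_j b_j‖ ≤ lam * ‖∑_{j<n} c_j b_j‖`. -/
def IsBasicWith (lam : ℝ) (b : ℕ → X) : Prop :=
  ∀ (c : ℕ → ℝ) (k n : ℕ), k ≤ n →
    ‖∑ j ∈ Finset.range k, c j • b j‖ ≤ lam * ‖∑ j ∈ Finset.range n, c j • b j‖

/-- `G ∈ X**` is a weak*-cluster point of the sequence `x` in `X`, i.e. a cluster
point of the canonical images of the `x j` in the topology `σ(X**, X*)`. -/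
def IsWeakStarClusterPt (G : StrongDual ℝ (StrongDual ℝ X)) (x : ℕ → X) : Prop :=
  MapClusterPt (StrongDual.toWeakDual G) Filter.atTop
    (fun j => StrongDual.toWeakDual (inclusionInDoubleDual ℝ X (x j)))

instance ddNormed : NormedAddCommGroup (StrongDual ℝ (StrongDual ℝ X)) :=
  ContinuousLinearMap.toNormedAddCommGroup

instance ddNormedSpace : NormedSpace ℝ (StrongDual ℝ (StrongDual ℝ X)) :=
  ContinuousLinearMap.toNormedSpace

private lemma prod_one_add_le {b : ℕ → ℝ} (hb : ∀ m, 0 ≤ b m) :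
    ∀ T : Finset ℕ, (∑ m ∈ T, b m) ≤ 1/2 → ∏ m ∈ T, (1 + b m) ≤ 1 + 2 * ∑ m ∈ T, b m := by
  intro T
  induction T using Finset.cons_induction with
  | empty => simp
  | cons i T hi ih =>
    intro hsum
    rw [Finset.prod_cons, Finset.sum_cons]
    rw [Finset.sum_cons] at hsum
    have hS'0 : 0 ≤ ∑ m ∈ T, b m := Finset.sum_nonneg fun m _ => hb m
    have hS' : (∑ m ∈ T, b m) ≤ 1/2 := by have := hb i; linarith
    have h2 := ih hS'
    have hbi := hb i
    have hkey := mul_le_mul_of_nonneg_left h2 (by linarith : (0:ℝ) ≤ 1 + b i)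
    nlinarith [mul_nonneg hbi hS'0]

private lemma exists_norming_finset {W : Type*} [NormedAddCommGroup W] [NormedSpace ℝ W]
    (V : Submodule ℝ (StrongDual ℝ W)) [FiniteDimensional ℝ V] {δ : ℝ} (hδ : 0 < δ) :
    ∃ F : Finset W, (∀ f ∈ F, ‖f‖ ≤ 1) ∧
      ∀ u : StrongDual ℝ W, u ∈ V → ∃ f ∈ F, (1 - δ) * ‖u‖ ≤ |u f| := by
  classical
  have habs : ∀ p q : ℝ, |p - q| ≤ |p| + |q| := fun p q => abs_sub p q
  have hg : ∀ y : V, ∃ f : W, ‖f‖ ≤ 1 ∧ ‖(y : StrongDual ℝ W)‖ - δ/3 ≤ |(y : StrongDual ℝ W) f| := by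
    intro y
    obtain ⟨f, hf1, hf2⟩ := (y : StrongDual ℝ W).exists_lt_apply_of_lt_opNorm
      (show ‖(y : StrongDual ℝ W)‖ - δ/3 < ‖(y : StrongDual ℝ W)‖ by linarith)
    refine ⟨f, hf1.le, ?_⟩
    rw [Real.norm_eq_abs] at hf2
    exact hf2.le
  choose g hg1 hg2 using hg
  obtain ⟨t, htfin, htcov⟩ := Metric.totallyBounded_iff.mp
    (isCompact_sphere (0 : V) 1).totallyBounded (δ/3) (by linarith)
  refine ⟨insert 0 (htfin.toFinset.image g), ?_, ?_⟩
  · intro f hf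
    rcases Finset.mem_insert.mp hf with rfl | hf
    · simp
    · obtain ⟨y, _, rfl⟩ := Finset.mem_image.mp hf
      exact hg1 y
  · intro u hu
    by_cases hu0 : u = 0
    · exact ⟨0, Finset.mem_insert_self _ _, by simp [hu0]⟩
    have hun : 0 < ‖u‖ := norm_pos_iff.mpr hu0
    set v : StrongDual ℝ W := ‖u‖⁻¹ • u with hv
    have hvV : v ∈ V := V.smul_mem _ hu
    have hvn : ‖v‖ = 1 := by
      rw [hv, norm_smul, norm_inv, norm_norm, inv_mul_cancel₀ hun.ne']
    have hyS : (⟨v, hvV⟩ : V) ∈ Metric.sphere (0 : V) 1 := by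
      rw [Metric.mem_sphere, Subtype.dist_eq]
      show dist v 0 = 1
      rw [dist_zero_right]
      exact hvn
    obtain ⟨y, hyt, hby⟩ := Set.mem_iUnion₂.mp (htcov hyS)
    have hdist : ‖v - (y : StrongDual ℝ W)‖ < δ/3 := by
      have h := Metric.mem_ball.mp hby
      rw [Subtype.dist_eq, dist_eq_norm] at h
      exact h
    refine ⟨g y, Finset.mem_insert_of_mem
      (Finset.mem_image_of_mem g (htfin.mem_toFinset.mpr hyt)), ?_⟩
    have h1 : 1 - δ/3 ≤ ‖(y : StrongDual ℝ W)‖ := by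
      have h := norm_sub_norm_le v (y : StrongDual ℝ W)
      rw [hvn] at h
      linarith
    have h2 : |(v - (y : StrongDual ℝ W)) (g y)| ≤ δ/3 := by
      calc |(v - (y : StrongDual ℝ W)) (g y)| = ‖(v - (y : StrongDual ℝ W)) (g y)‖ :=
            (Real.norm_eq_abs _).symm
        _ ≤ ‖v - (y : StrongDual ℝ W)‖ * ‖g y‖ := ContinuousLinearMap.le_opNorm _ _
        _ ≤ (δ/3) * 1 := mul_le_mul hdist.le (hg1 y) (norm_nonneg _) (by linarith)
        _ = δ/3 := mul_one _
    have h3 : 1 - δ ≤ |v (g y)| := by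
      have he : v (g y) = (y : StrongDual ℝ W) (g y) + (v - (y : StrongDual ℝ W)) (g y) := by
        simp
      have h4 := hg2 y
      have h5 : |(y : StrongDual ℝ W) (g y)| - |(v - (y : StrongDual ℝ W)) (g y)| ≤ |v (g y)| := by
        rw [he]
        have := habs ((y : StrongDual ℝ W) (g y) + (v - (y : StrongDual ℝ W)) (g y))
          ((v - (y : StrongDual ℝ W)) (g y))
        simp only [add_sub_cancel_right] at this
        linarith
      linarith
    have hu' : u (g y) = ‖u‖ * v (g y) := by
      rw [hv]
      have : u = ‖u‖ • v := by rw [hv, smul_smul, mul_inv_cancel₀ hun.ne', one_smul]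
      calc u (g y) = (‖u‖ • v) (g y) := by rw [← this]
        _ = ‖u‖ * v (g y) := rfl
    rw [hu', abs_mul, abs_of_pos hun]
    calc (1 - δ) * ‖u‖ = ‖u‖ * (1 - δ) := mul_comm _ _
      _ ≤ ‖u‖ * |v (g y)| := mul_le_mul_of_nonneg_left h3 hun.le


private lemma step_aux {W : Type*} [NormedAddCommGroup W] [NormedSpace ℝ W]
    (u v : StrongDual ℝ W) (f : W) (A d cm e : ℝ)
    (hA0 : 0 < A) (hA4 : A ≤ 1/4) (hd0 : 0 < d) (hf1 : ‖f‖ ≤ 1)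
    (hfnorm : (1 - A) * ‖u‖ ≤ |u f|)
    (heval : v f = u f + cm * e)
    (hsmall : |e| ≤ A * d)
    (hcm : |cm| * d ≤ ‖u‖ + ‖v‖) :
    ‖u‖ ≤ (1 + 6 * A) * ‖v‖ := by
  have habs : ∀ p q : ℝ, |p - q| ≤ |p| + |q| := fun p q => abs_sub p q
  have hub : |v f| ≤ ‖v‖ := by
    calc |v f| = ‖v f‖ := (Real.norm_eq_abs _).symm
      _ ≤ ‖v‖ * ‖f‖ := ContinuousLinearMap.le_opNorm _ _
      _ ≤ ‖v‖ * 1 := mul_le_mul_of_nonneg_left hf1 (norm_nonneg _)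
      _ = ‖v‖ := mul_one _
  have e1 : |u f| ≤ ‖v‖ + |cm| * (A * d) := by
    have e2 : u f = v f - cm * e := by rw [heval]; ring
    calc |u f| = |v f - cm * e| := by rw [e2]
      _ ≤ |v f| + |cm * e| := habs _ _
      _ = |v f| + |cm| * |e| := by rw [abs_mul]
      _ ≤ ‖v‖ + |cm| * (A * d) :=
        add_le_add hub (mul_le_mul_of_nonneg_left hsmall (abs_nonneg _))
  have e3 : |cm| * (A * d) = A * (|cm| * d) := by ring
  have e4 : A * (|cm| * d) ≤ A * (‖u‖ + ‖v‖) := mul_le_mul_of_nonneg_left hcm hA0.le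
  have hArith : (1 - A) * ‖u‖ ≤ ‖v‖ + A * (‖u‖ + ‖v‖) := by linarith
  nlinarith [norm_nonneg u, norm_nonneg v,
    mul_nonneg (mul_nonneg hA0.le (by linarith : (0:ℝ) ≤ 1 - 4 * A)) (norm_nonneg v),
    (by linarith : (0:ℝ) < 1 - 2 * A)]

private lemma chain_aux {F : Type*} [NormedAddCommGroup F] (u : ℕ → F) (κ : ℕ → ℝ) (n : ℕ)
    (hκ0 : ∀ m, 0 ≤ κ m)
    (hstep : ∀ m, m < n → ‖u m‖ ≤ (1 + κ m) * ‖u (m+1)‖) :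
    ∀ k, k ≤ n → ‖u k‖ ≤ (∏ m ∈ Finset.Ico k n, (1 + κ m)) * ‖u n‖ := by
  intro k hkn
  have H : ∀ i, k ≤ i → i ≤ n →
      ‖u k‖ ≤ (∏ m ∈ Finset.Ico k i, (1 + κ m)) * ‖u i‖ := by
    intro i hki
    induction i, hki using Nat.le_induction with
    | base => intro _; simp
    | succ i hki ih =>
      intro hin
      have h1 := ih (by omega)
      have h2 := hstep i (by omega)
      have hprodnn : 0 ≤ ∏ m ∈ Finset.Ico k i, (1 + κ m) :=
        Finset.prod_nonneg fun m _ => by linarith [hκ0 m]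
      calc ‖u k‖ ≤ (∏ m ∈ Finset.Ico k i, (1 + κ m)) * ‖u i‖ := h1
        _ ≤ (∏ m ∈ Finset.Ico k i, (1 + κ m)) * ((1 + κ i) * ‖u (i+1)‖) :=
          mul_le_mul_of_nonneg_left h2 hprodnn
        _ = (∏ m ∈ Finset.Ico k (i+1), (1 + κ m)) * ‖u (i+1)‖ := by
          rw [Finset.prod_Ico_succ_top hki]
          ring
  exact H n hkn le_rfl

set_option maxHeartbeats 2000000 in
/-- if a bounded sequence `(x j)` has a weak*-cluster point
`G ∈ X** \ X` with `d = dist(G, X)`, then for `ε > 0`, `lam = 1/d + ε`,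
`β = (‖G‖ + d)/d + ε`, `(x j)` has a subsequence `(b j)` which is `β`-basic and
satisfies `|∑_{k≤j<n} c_j| ≤ lam‖∑_{j<n} c_j b_j‖`. -/
theorem stmt_10 [CompleteSpace X] (x : ℕ → X) (hx : Bornology.IsBounded (Set.range x))
    (G : StrongDual ℝ (StrongDual ℝ X)) (hG : IsWeakStarClusterPt G x)
    (hGX : G ∉ Set.range (inclusionInDoubleDual ℝ X))
    (d lam β ε : ℝ) (hε : 0 < ε)
    (hd : d = Metric.infDist G (Set.range (inclusionInDoubleDual ℝ X)))
    (hlam : lam = 1 / d + ε) (hβ : β = (‖G‖ + d) / d + ε) :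
    ∃ s : ℕ → ℕ, StrictMono s ∧ IsBasicWith β (fun j => x (s j)) ∧
      ∀ (c : ℕ → ℝ) (k n : ℕ), k ≤ n →
        |∑ j ∈ Finset.Ico k n, c j| ≤ lam * ‖∑ j ∈ Finset.range n, c j • x (s j)‖ := by
  classical
  subst hlam hβ
  have habs : ∀ p q : ℝ, |p - q| ≤ |p| + |q| := fun p q => abs_sub p q
  have hJnorm : ∀ z : X, ‖inclusionInDoubleDual ℝ X z‖ = ‖z‖ := fun z =>
    (inclusionInDoubleDualLi ℝ (E := X)).norm_map z
  have hd0 : 0 < d := by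
    have hiso : Isometry (inclusionInDoubleDual ℝ X) :=
      AddMonoidHomClass.isometry_of_norm _ hJnorm
    have hcl : IsClosed (Set.range (inclusionInDoubleDual ℝ X)) :=
      hiso.isClosedEmbedding.isClosed_range
    have hne : (Set.range (inclusionInDoubleDual ℝ X)).Nonempty := ⟨_, ⟨0, rfl⟩⟩
    rw [hd]
    exact (hcl.notMem_iff_infDist_pos hne).mp hGX
  have hG1 : 0 < d + ‖G‖ := by linarith [norm_nonneg G]
  -- the smallness parameter ρ
  obtain ⟨ρ, hρ⟩ : ∃ ρ : ℝ, ρ = min (1/24) (ε * min d (d / (d + ‖G‖)) / 24) := ⟨_, rfl⟩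
  have hmin0 : 0 < min d (d / (d + ‖G‖)) := lt_min hd0 (div_pos hd0 hG1)
  have hρ0 : 0 < ρ := by rw [hρ]; exact lt_min (by norm_num) (by positivity)
  have hρ24 : ρ ≤ 1/24 := hρ ▸ min_le_left _ _
  have hρd : 24 * ρ ≤ ε * d := by
    have h1 : ρ ≤ ε * min d (d / (d + ‖G‖)) / 24 := hρ ▸ min_le_right _ _
    have h2 : min d (d / (d + ‖G‖)) ≤ d := min_le_left _ _
    nlinarith
  have hρG : 24 * ρ * (d + ‖G‖) ≤ ε * d := by
    have h1 : ρ ≤ ε * min d (d / (d + ‖G‖)) / 24 := hρ ▸ min_le_right _ _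
    have h2 : min d (d / (d + ‖G‖)) ≤ d / (d + ‖G‖) := min_le_right _ _
    have h3 : 24 * ρ ≤ ε * min d (d / (d + ‖G‖)) := by linarith
    have h4 : ε * min d (d / (d + ‖G‖)) ≤ ε * (d / (d + ‖G‖)) :=
      mul_le_mul_of_nonneg_left h2 hε.le
    have h5 : 24 * ρ * (d + ‖G‖) ≤ ε * (d / (d + ‖G‖)) * (d + ‖G‖) :=
      mul_le_mul_of_nonneg_right (by linarith) hG1.le
    have h6 : ε * (d / (d + ‖G‖)) * (d + ‖G‖) = ε * d := by field_simp
    linarith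
  -- the scale of precisions
  obtain ⟨a, ha⟩ : ∃ a : ℕ → ℝ, a = fun M => ρ * (1/2)^M := ⟨_, rfl⟩
  have hae : ∀ M, a M = ρ * (1/2)^M := fun M => by rw [ha]
  have ha0 : ∀ M, 0 < a M := fun M => by rw [hae M]; positivity
  have ha4 : ∀ M, a M ≤ 1/4 := fun M => by
    rw [hae M]
    have h1 : (1/2 : ℝ)^M ≤ 1 := pow_le_one₀ (by norm_num) (by norm_num)
    nlinarith
  have haanti : ∀ i j : ℕ, i ≤ j → a j ≤ a i := fun i j hij => by
    rw [hae i, hae j]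
    exact mul_le_mul_of_nonneg_left
      (pow_le_pow_of_le_one (by norm_num) (by norm_num) hij) hρ0.le
  -- finite norming sets for the spans of initial segments together with G
  obtain ⟨V, hV⟩ : ∃ V : ℕ → Submodule ℝ (StrongDual ℝ (StrongDual ℝ X)), V = fun M =>
      Submodule.span ℝ (insert G ((fun k => inclusionInDoubleDual ℝ X (x k)) '' Set.Iic M)) :=
    ⟨_, rfl⟩
  have hVe : ∀ M, V M =
      Submodule.span ℝ (insert G ((fun k => inclusionInDoubleDual ℝ X (x k)) '' Set.Iic M)) :=
    fun M => by rw [hV]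
  have hVfd : ∀ M, FiniteDimensional ℝ (V M) := fun M => by
    rw [hVe M]
    exact FiniteDimensional.span_of_finite ℝ (((Set.finite_Iic M).image _).insert G)
  have hnet : ∀ M : ℕ, ∃ F : Finset (StrongDual ℝ X), (∀ f ∈ F, ‖f‖ ≤ 1) ∧
      ∀ u : StrongDual ℝ (StrongDual ℝ X), u ∈ V M → ∃ f ∈ F, (1 - a M) * ‖u‖ ≤ |u f| := fun M =>
    haveI := hVfd M
    exists_norming_finset (V M) (ha0 M)
  choose Net hNet1 hNet2 using hnet
  obtain ⟨CNet, hCN⟩ : ∃ CNet : ℕ → Finset (StrongDual ℝ X),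
      CNet = fun M => (Finset.range (M+1)).biUnion Net := ⟨_, rfl⟩
  have hCNe : ∀ M, CNet M = (Finset.range (M+1)).biUnion Net := fun M => by rw [hCN]
  have hCmono : ∀ i j : ℕ, i ≤ j → CNet i ⊆ CNet j := fun i j hij => by
    rw [hCNe i, hCNe j]
    exact Finset.biUnion_subset_biUnion_of_subset_left _ (Finset.range_subset_range.mpr (by omega))
  have hCsub : ∀ M, Net M ⊆ CNet M := fun M f hf => by
    rw [hCNe M]
    exact Finset.mem_biUnion.mpr ⟨M, Finset.self_mem_range_succ M, hf⟩
  -- extraction from the weak* cluster point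
  have hclu : ∀ (CF : Finset (StrongDual ℝ X)) (η : ℝ), 0 < η → ∀ N : ℕ,
      ∃ j, N ≤ j ∧ ∀ f ∈ CF, |inclusionInDoubleDual ℝ X (x j) f - G f| < η := by
    intro CF η hη N
    obtain ⟨U, hU⟩ : ∃ U : Set (WeakDual ℝ (StrongDual ℝ X)),
        U = {H | ∀ f ∈ CF, |H f - G f| < η} := ⟨_, rfl⟩
    have hUopen : IsOpen U := by
      have hUeq : U = ⋂ f ∈ CF,
          (fun H : WeakDual ℝ (StrongDual ℝ X) => H f) ⁻¹' Metric.ball (G f) η := by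
        rw [hU]
        ext H
        simp [Real.dist_eq]
      rw [hUeq]
      exact isOpen_biInter_finset fun f _ =>
        (WeakDual.eval_continuous f).isOpen_preimage _ Metric.isOpen_ball
    have hGU : StrongDual.toWeakDual G ∈ U := by
      rw [hU]
      intro f hf
      show |G f - G f| < η
      simpa using hη
    have hfreq := (mapClusterPt_iff_frequently.mp hG) U (hUopen.mem_nhds hGU)
    rw [Filter.frequently_atTop] at hfreq
    obtain ⟨j, hjN, hjU⟩ := hfreq N
    rw [hU] at hjU
    exact ⟨j, hjN, fun f hf => hjU f hf⟩
  -- recursive choice of the subsequence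
  obtain ⟨s, -, hs⟩ := exists_seq_of_forall_finset_exists (fun _ => True)
    (fun i j => i < j ∧ ∀ f ∈ CNet i, |inclusionInDoubleDual ℝ X (x j) f - G f| < a i * d)
    (by
      intro T _
      rcases T.eq_empty_or_nonempty with rfl | hTne
      · exact ⟨0, trivial, by simp⟩
      · obtain ⟨j, hjN, hjs⟩ := hclu (CNet (T.max' hTne)) (a (T.max' hTne) * d)
          (mul_pos (ha0 _) hd0) (T.max' hTne + 1)
        refine ⟨j, trivial, fun i hi => ⟨?_, fun f hf => ?_⟩⟩
        · have := Finset.le_max' T i hi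
          omega
        · have h1 := hjs f (hCmono i (T.max' hTne) (Finset.le_max' T i hi) hf)
          have h2 : a (T.max' hTne) * d ≤ a i * d :=
            mul_le_mul_of_nonneg_right (haanti i _ (Finset.le_max' T i hi)) hd0.le
          linarith)
  have hsmono : StrictMono s := fun m n h => (hs m n h).1
  -- the lower bound coming from the distance of G to X
  have hlow : ∀ (y : X) (τ : ℝ),
      |τ| * d ≤ ‖inclusionInDoubleDual ℝ X y + τ • G‖ := by
    intro y τ
    rcases eq_or_ne τ 0 with rfl | hτ
    · simpa using norm_nonneg _
    · have h1 : inclusionInDoubleDual ℝ X y + τ • G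
          = τ • (G - inclusionInDoubleDual ℝ X (-(τ⁻¹ • y))) := by
        rw [map_neg, map_smul, smul_sub, smul_neg, sub_neg_eq_add, smul_smul,
          mul_inv_cancel₀ hτ, one_smul, add_comm]
      rw [h1, norm_smul, Real.norm_eq_abs]
      have h2 : d ≤ ‖G - inclusionInDoubleDual ℝ X (-(τ⁻¹ • y))‖ := by
        rw [hd, ← dist_eq_norm]
        exact Metric.infDist_le_dist_of_mem (Set.mem_range_self _)
      exact mul_le_mul_of_nonneg_left h2 (abs_nonneg τ)
  -- the key chain inequality
  have key : ∀ (c : ℕ → ℝ) (n k : ℕ), k ≤ n →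
      ‖inclusionInDoubleDual ℝ X (∑ j ∈ Finset.range k, c j • x (s (j+1)))
        + (∑ j ∈ Finset.Ico k n, c j) • G‖
      ≤ (1 + 24 * ρ) * ‖∑ j ∈ Finset.range n, c j • x (s (j+1))‖ := by
    intro c n k hkn
    obtain ⟨T, hT⟩ : ∃ T : ℕ → ℝ, T = fun m => ∑ j ∈ Finset.Ico m n, c j := ⟨_, rfl⟩
    have hTe : ∀ m, T m = ∑ j ∈ Finset.Ico m n, c j := fun m => by rw [hT]
    obtain ⟨u, hu⟩ : ∃ u : ℕ → StrongDual ℝ (StrongDual ℝ X), u = fun m =>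
        inclusionInDoubleDual ℝ X (∑ j ∈ Finset.range m, c j • x (s (j+1))) + T m • G :=
      ⟨_, rfl⟩
    have hue : ∀ m, u m =
        inclusionInDoubleDual ℝ X (∑ j ∈ Finset.range m, c j • x (s (j+1))) + T m • G :=
      fun m => by rw [hu]
    have hulow : ∀ m : ℕ, |T m| * d ≤ ‖u m‖ := fun m => by
      rw [hue m]
      exact hlow _ _
    have hstep : ∀ m, m < n → ‖u m‖ ≤ (1 + 6 * a (s m)) * ‖u (m+1)‖ := by
      intro m hmn
      have hA0 : 0 < a (s m) := ha0 _
      have hA4 : a (s m) ≤ 1/4 := ha4 _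
      have humem : u m ∈ V (s m) := by
        rw [hue m, hVe (s m)]
        apply Submodule.add_mem
        · rw [map_sum]
          apply Submodule.sum_mem
          intro j hj
          rw [map_smul]
          apply Submodule.smul_mem
          apply Submodule.subset_span
          apply Set.mem_insert_of_mem
          refine ⟨s (j+1), ?_, rfl⟩
          have hj' : j + 1 ≤ m := Finset.mem_range.mp hj
          exact hsmono.monotone hj'
        · exact Submodule.smul_mem _ _
            (Submodule.subset_span (Set.mem_insert _ _))
      obtain ⟨f, hfN, hfnorm⟩ := hNet2 (s m) (u m) humem
      have hf1 : ‖f‖ ≤ 1 := hNet1 (s m) f hfN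
      have hsmall : |inclusionInDoubleDual ℝ X (x (s (m+1))) f - G f| ≤ a (s m) * d :=
        ((hs m (m+1) (by omega)).2 f (hCsub (s m) hfN)).le
      have hTm : T m = c m + T (m+1) := by
        rw [hTe m, hTe (m+1)]
        exact Finset.sum_eq_sum_Ico_succ_bot hmn c
      have huu : u (m+1) = u m
          + c m • (inclusionInDoubleDual ℝ X (x (s (m+1))) - G) := by
        rw [hue (m+1), hue m, hTm, Finset.sum_range_succ, map_add, map_smul, add_smul,
          smul_sub]
        abel
      have heval : u (m+1) f = u m f
          + c m * (inclusionInDoubleDual ℝ X (x (s (m+1))) f - G f) := by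
        rw [huu]
        simp only [ContinuousLinearMap.add_apply, ContinuousLinearMap.coe_smul',
          Pi.smul_apply, ContinuousLinearMap.coe_sub', Pi.sub_apply, smul_eq_mul]
      have hcm : |c m| * d ≤ ‖u m‖ + ‖u (m+1)‖ := by
        have hc : c m = T m - T (m+1) := by linarith
        rw [hc]
        calc |T m - T (m+1)| * d ≤ (|T m| + |T (m+1)|) * d :=
              mul_le_mul_of_nonneg_right (habs _ _) hd0.le
          _ = |T m| * d + |T (m+1)| * d := add_mul _ _ _
          _ ≤ ‖u m‖ + ‖u (m+1)‖ := add_le_add (hulow m) (hulow (m+1))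
      exact step_aux (u m) (u (m+1)) f (a (s m)) d (c m) _
        hA0 hA4 hd0 hf1 hfnorm heval hsmall hcm
    have hchain := chain_aux u (fun m => 6 * a (s m)) n
      (fun m => by show (0:ℝ) ≤ 6 * a (s m); linarith [(ha0 (s m)).le]) hstep k hkn
    have hsum : ∑ m ∈ Finset.Ico k n, 6 * a (s m) ≤ 12 * ρ := by
      have h1 : ∀ m : ℕ, 6 * a (s m) ≤ 6 * ρ * (1/2)^m := by
        intro m
        have hp : (1/2 : ℝ)^(s m) ≤ (1/2)^m :=
          pow_le_pow_of_le_one (by norm_num) (by norm_num) hsmono.le_apply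
        rw [hae (s m)]
        nlinarith
      calc ∑ m ∈ Finset.Ico k n, 6 * a (s m)
          ≤ ∑ m ∈ Finset.Ico k n, 6 * ρ * (1/2)^m := Finset.sum_le_sum fun m _ => h1 m
        _ ≤ ∑ m ∈ Finset.range n, 6 * ρ * (1/2)^m := by
            apply Finset.sum_le_sum_of_subset_of_nonneg
            · rw [Finset.range_eq_Ico]
              exact Finset.Ico_subset_Ico (Nat.zero_le k) le_rfl
            · intro m _ _
              positivity
        _ = 6 * ρ * ∑ m ∈ Finset.range n, (1/2)^m := by rw [Finset.mul_sum]
        _ ≤ 6 * ρ * 2 := by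
            have := sum_geometric_two_le n
            nlinarith
        _ = 12 * ρ := by ring
    have hprodle : ∏ m ∈ Finset.Ico k n, (1 + 6 * a (s m)) ≤ 1 + 24 * ρ := by
      have h0 : ∀ m : ℕ, 0 ≤ 6 * a (s m) := fun m => by linarith [(ha0 (s m)).le]
      have h1 := prod_one_add_le h0 (Finset.Ico k n) (by linarith)
      linarith
    have hTn : T n = 0 := by rw [hTe n]; simp
    have hun : ‖u n‖ = ‖∑ j ∈ Finset.range n, c j • x (s (j+1))‖ := by
      rw [hue n, hTn, zero_smul, add_zero]
      exact hJnorm _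
    have hfin : ‖u k‖ ≤ (1 + 24 * ρ) * ‖∑ j ∈ Finset.range n, c j • x (s (j+1))‖ := by
      calc ‖u k‖ ≤ (∏ m ∈ Finset.Ico k n, (1 + 6 * a (s m))) * ‖u n‖ := hchain
        _ ≤ (1 + 24 * ρ) * ‖u n‖ := mul_le_mul_of_nonneg_right hprodle (norm_nonneg _)
        _ = (1 + 24 * ρ) * ‖∑ j ∈ Finset.range n, c j • x (s (j+1))‖ := by rw [hun]
    rw [hue k, hTe k] at hfin
    exact hfin
  -- conclusion
  refine ⟨fun m => s (m+1), fun m n h => hsmono (by omega), ?_, ?_⟩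
  · -- β-basic
    intro c k n hkn
    have hkey := key c n k hkn
    have hTk := hlow (∑ j ∈ Finset.range k, c j • x (s (j+1))) (∑ j ∈ Finset.Ico k n, c j)
    have hPx : ‖∑ j ∈ Finset.range k, c j • x (s (j+1))‖
        ≤ ‖inclusionInDoubleDual ℝ X (∑ j ∈ Finset.range k, c j • x (s (j+1)))
            + (∑ j ∈ Finset.Ico k n, c j) • G‖
          + |∑ j ∈ Finset.Ico k n, c j| * ‖G‖ := by
      have e1 : inclusionInDoubleDual ℝ X (∑ j ∈ Finset.range k, c j • x (s (j+1)))
          = (inclusionInDoubleDual ℝ X (∑ j ∈ Finset.range k, c j • x (s (j+1)))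
            + (∑ j ∈ Finset.Ico k n, c j) • G) - (∑ j ∈ Finset.Ico k n, c j) • G := by
        abel
      calc ‖∑ j ∈ Finset.range k, c j • x (s (j+1))‖
          = ‖inclusionInDoubleDual ℝ X (∑ j ∈ Finset.range k, c j • x (s (j+1)))‖ :=
            (hJnorm _).symm
        _ = ‖(inclusionInDoubleDual ℝ X (∑ j ∈ Finset.range k, c j • x (s (j+1)))
            + (∑ j ∈ Finset.Ico k n, c j) • G) - (∑ j ∈ Finset.Ico k n, c j) • G‖ := by
            rw [← e1]
        _ ≤ ‖inclusionInDoubleDual ℝ X (∑ j ∈ Finset.range k, c j • x (s (j+1)))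
            + (∑ j ∈ Finset.Ico k n, c j) • G‖ + ‖(∑ j ∈ Finset.Ico k n, c j) • G‖ :=
            norm_sub_le _ _
        _ = _ := by rw [norm_smul, Real.norm_eq_abs]
    set τ : ℝ := ∑ j ∈ Finset.Ico k n, c j with hτ
    set P : X := ∑ j ∈ Finset.range k, c j • x (s (j+1)) with hP
    set S : X := ∑ j ∈ Finset.range n, c j • x (s (j+1)) with hS
    set N : ℝ := ‖inclusionInDoubleDual ℝ X P + τ • G‖ with hN
    have m1 : ‖P‖ * d ≤ N * d + |τ| * ‖G‖ * d :=
      le_of_le_of_eq (mul_le_mul_of_nonneg_right hPx hd0.le) (by ring)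
    have m2 : |τ| * d * ‖G‖ ≤ N * ‖G‖ :=
      mul_le_mul_of_nonneg_right hTk (norm_nonneg G)
    have m3 : N * (d + ‖G‖) ≤ (1 + 24 * ρ) * ‖S‖ * (d + ‖G‖) :=
      mul_le_mul_of_nonneg_right hkey hG1.le
    have m4 : 24 * ρ * (d + ‖G‖) * ‖S‖ ≤ ε * d * ‖S‖ :=
      mul_le_mul_of_nonneg_right hρG (norm_nonneg S)
    have hfinal : ‖P‖ * d ≤ ((‖G‖ + d) / d + ε) * ‖S‖ * d := by
      have hβd : ((‖G‖ + d) / d + ε) * ‖S‖ * d = (‖G‖ + d) * ‖S‖ + ε * d * ‖S‖ := by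
        field_simp
      rw [hβd]
      nlinarith
    exact le_of_mul_le_mul_right hfinal hd0
  · -- the lam inequality
    intro c k n hkn
    have hkey := key c n k hkn
    have hTk := hlow (∑ j ∈ Finset.range k, c j • x (s (j+1))) (∑ j ∈ Finset.Ico k n, c j)
    set τ : ℝ := ∑ j ∈ Finset.Ico k n, c j with hτ
    set S : X := ∑ j ∈ Finset.range n, c j • x (s (j+1)) with hS
    have hNS : |τ| * d ≤ (1 + 24 * ρ) * ‖S‖ := le_trans hTk hkey
    have m4 : 24 * ρ * ‖S‖ ≤ ε * d * ‖S‖ := by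
      have := mul_le_mul_of_nonneg_right hρd (norm_nonneg S)
      linarith
    have hfinal : |τ| * d ≤ (1 / d + ε) * ‖S‖ * d := by
      have h6 : (1 / d + ε) * ‖S‖ * d = ‖S‖ + ε * d * ‖S‖ := by
        field_simp
      rw [h6]
      nlinarith
    exact le_of_mul_le_mul_right hfinal hd0
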